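/- arXiv:1110.6645 — 2 statements merged into one kernel-verified Lean document; each statement's English description precedes it below -/
import Mathlib

section
/- For spins s₁, s₂ about rectangles R₁, R₂, the conjugate s₁s₂s₁ is a spin if and only if either s₁ and s₂ commute or R₁ contains R₂; moreover, in the latter case the rectangle of the spin s₁s₂s₁ has the same dimensions (shape) as R₂. -/
/-- Positions on an `m × n` board, as (row, column) pairs. -/
abbrev Pos (m n : ℕ) := Fin m × Fin n

/-- An element `(α, u)` of the group `Spin_{m×n} = ℤ/2ℤ ≀ S_{mn}`: a permutation `α` of
the positions together with an orientation-flip vector `u ∈ (ℤ/2ℤ)^{mn}`. -/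
@[ext] structure SpinElt (m n : ℕ) where
  perm : Equiv.Perm (Pos m n)
  flip : Pos m n → ZMod 2

instance (m n : ℕ) : Group (SpinElt m n) where
  mul a b := ⟨a.perm * b.perm, fun p => a.flip p + b.flip (a.perm⁻¹ p)⟩
  one := ⟨1, 0⟩
  inv a := ⟨a.perm⁻¹, fun p => a.flip (a.perm p)⟩
  div a b := ⟨a.perm * b.perm⁻¹, fun p => a.flip p + b.flip (b.perm (a.perm⁻¹ p))⟩
  div_eq_mul_inv _ _ := rfl
  mul_assoc a b c := by
    refine SpinElt.ext (mul_assoc ..) (funext fun p => ?_)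
    show a.flip p + b.flip (a.perm⁻¹ p) + c.flip ((a.perm * b.perm)⁻¹ p)
        = a.flip p + (b.flip (a.perm⁻¹ p) + c.flip (b.perm⁻¹ (a.perm⁻¹ p)))
    simp [add_assoc]
  one_mul a := by
    refine SpinElt.ext (one_mul _) (funext fun p => ?_)
    show 0 + a.flip ((1 : Equiv.Perm (Pos m n))⁻¹ p) = a.flip p
    simp
  mul_one a := by
    refine SpinElt.ext (mul_one _) (funext fun p => ?_)
    show a.flip p + 0 = a.flip p
    simp
  inv_mul_cancel a := by
    refine SpinElt.ext (inv_mul_cancel _) (funext fun p => ?_)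
    show a.flip (a.perm p) + a.flip ((a.perm⁻¹)⁻¹ p) = 0
    simp [CharTwo.add_self_eq_zero]

@[simp] lemma SpinElt.mul_def {m n : ℕ} (a b : SpinElt m n) :
    a * b = ⟨a.perm * b.perm, fun p => a.flip p + b.flip (a.perm⁻¹ p)⟩ := rfl

@[simp] lemma SpinElt.one_def {m n : ℕ} : (1 : SpinElt m n) = ⟨1, 0⟩ := rfl

@[simp] lemma SpinElt.inv_def {m n : ℕ} (a : SpinElt m n) :
    a⁻¹ = ⟨a.perm⁻¹, fun p => a.flip (a.perm p)⟩ := rfl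

/-- A rectangle on the `m × n` board, given by its top-left corner `(r1, c1)` and
bottom-right corner `(r2, c2)` (0-indexed). -/
structure Rect (m n : ℕ) where
  r1 : ℕ
  c1 : ℕ
  r2 : ℕ
  c2 : ℕ
  hr : r1 ≤ r2
  hc : c1 ≤ c2
  hm : r2 < m
  hn : c2 < n

/-- Membership of a position in a rectangle. -/
def Rect.Mem {m n : ℕ} (R : Rect m n) (p : Pos m n) : Prop :=
  R.r1 ≤ p.1.val ∧ p.1.val ≤ R.r2 ∧ R.c1 ≤ p.2.val ∧ p.2.val ≤ R.c2

instance {m n : ℕ} (R : Rect m n) (p : Pos m n) : Decidable (R.Mem p) := by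
  unfold Rect.Mem; infer_instance

/-- Rotation of the board by 180° about the center of `R`, fixing everything outside `R`. -/
def Rect.rotFun {m n : ℕ} (R : Rect m n) (p : Pos m n) : Pos m n :=
  if h : R.Mem p then
    (⟨R.r1 + R.r2 - p.1.val, by obtain ⟨h1, h2, h3, h4⟩ := h; have := R.hm; omega⟩,
     ⟨R.c1 + R.c2 - p.2.val, by obtain ⟨h1, h2, h3, h4⟩ := h; have := R.hn; omega⟩)
  else p

lemma Rect.rotFun_fst {m n : ℕ} (R : Rect m n) (p : Pos m n) (h : R.Mem p) :
    ((R.rotFun p).1 : ℕ) = R.r1 + R.r2 - p.1.val := by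
  simp only [Rect.rotFun, dif_pos h]

lemma Rect.rotFun_snd {m n : ℕ} (R : Rect m n) (p : Pos m n) (h : R.Mem p) :
    ((R.rotFun p).2 : ℕ) = R.c1 + R.c2 - p.2.val := by
  simp only [Rect.rotFun, dif_pos h]

lemma Rect.rotFun_of_not_mem {m n : ℕ} (R : Rect m n) (p : Pos m n) (h : ¬ R.Mem p) :
    R.rotFun p = p := dif_neg h

lemma Rect.mem_rotFun {m n : ℕ} (R : Rect m n) (p : Pos m n) (h : R.Mem p) :
    R.Mem (R.rotFun p) := by
  obtain ⟨h1, h2, h3, h4⟩ := id h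
  refine ⟨?_, ?_, ?_, ?_⟩
  · rw [R.rotFun_fst p h]; omega
  · rw [R.rotFun_fst p h]; omega
  · rw [R.rotFun_snd p h]; omega
  · rw [R.rotFun_snd p h]; omega

lemma Rect.rotFun_involutive {m n : ℕ} (R : Rect m n) : Function.Involutive R.rotFun := by
  intro p
  by_cases h : R.Mem p
  · have h2 := R.mem_rotFun p h
    obtain ⟨h1', h2', h3', h4'⟩ := id h
    have e1 := R.rotFun_fst p h
    have e2 := R.rotFun_snd p h
    refine Prod.ext (Fin.ext ?_) (Fin.ext ?_)
    · rw [R.rotFun_fst _ h2, e1]; omega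
    · rw [R.rotFun_snd _ h2, e2]; omega
  · rw [R.rotFun_of_not_mem p h, R.rotFun_of_not_mem p h]

/-- The permutation of positions effected by the spin about `R`. -/
def Rect.spinPerm {m n : ℕ} (R : Rect m n) : Equiv.Perm (Pos m n) :=
  Function.Involutive.toPerm R.rotFun R.rotFun_involutive

/-- The spin about the rectangle `R`: it rotates the tiles in `R` by 180° and flips
the orientation of every tile in `R`. -/
def Rect.spin {m n : ℕ} (R : Rect m n) : SpinElt m n :=
  ⟨R.spinPerm, fun p => if R.Mem p then 1 else 0⟩

/-- An element of `Spin_{m×n}` is a spin if it is the spin about some rectangle. -/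
def IsSpin {m n : ℕ} (x : SpinElt m n) : Prop := ∃ R : Rect m n, x = R.spin

/-- The dimensions (number of rows, number of columns) of a rectangle. -/
def Rect.dims {m n : ℕ} (R : Rect m n) : ℕ × ℕ := (R.r2 + 1 - R.r1, R.c2 + 1 - R.c1)

/-- `R₁` contains `R₂`. -/
def Rect.Contains {m n : ℕ} (R₁ R₂ : Rect m n) : Prop :=
  R₁.r1 ≤ R₂.r1 ∧ R₂.r2 ≤ R₁.r2 ∧ R₁.c1 ≤ R₂.c1 ∧ R₂.c2 ≤ R₁.c2

/-!
Write `ρᵢ` for the rotation of `Rᵢ`. The element `s₁s₂s₁` has permutation `ρ₁ρ₂ρ₁` and flips the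
tiles `p` with `[p ∈ R₁] + [ρ₁ p ∈ R₂] + [ρ₂ρ₁ p ∈ R₁] = 1` in `ℤ/2ℤ`. If `R₁ ⊇ R₂`, then `ρ₂`
preserves `R₁`, so the flipped set is `ρ₁(R₂)`, the rectangle `R₂` rotated inside `R₁`, and
`ρ₁ρ₂ρ₁` is its rotation.

Conversely, let `s₁s₂s₁ = s₃`. A tile `q` moved by `ρ₂` gives the tile `ρ₁ q` moved by `s₃`, hence
flipped by it; comparing flips shows that `ρ₂` preserves `R₁`, and then `R₃ = ρ₁⁻¹(R₂)`. Preserving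
`R₁` forces `R₁ ∩ R₂` to be concentric with `R₂`, so if `R₁ ⊉ R₂` two opposite corners of `R₂` lie
outside `R₁`. They are fixed by `ρ₁`, hence lie in `R₃`, so `R₂ ⊆ R₃ = ρ₁⁻¹(R₂)`, which forces
`R₃ = R₂`, i.e. `s₁s₂s₁ = s₂`, so `s₁` and `s₂` commute.
-/

lemma ZMod.two_ite_add_ite (a b : Prop) [Decidable a] [Decidable b] :
    ((if a then 1 else 0 : ZMod 2) + if b then 1 else 0) = if Xor a b then 1 else 0 := by
  by_cases a <;> by_cases b <;> simp_all; decide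

lemma ZMod.two_ite_eq_ite_iff (a b : Prop) [Decidable a] [Decidable b] :
    ((if a then 1 else 0 : ZMod 2) = if b then 1 else 0) ↔ (a ↔ b) := by
  by_cases a <;> by_cases b <;> simp_all

attribute [ext] Rect

namespace Rect

variable {m n : ℕ}

lemma mem_rotFun_iff (R : Rect m n) (p : Pos m n) : R.Mem (R.rotFun p) ↔ R.Mem p :=
  ⟨fun h => R.rotFun_involutive p ▸ R.mem_rotFun _ h, R.mem_rotFun p⟩

lemma spin_mul_self (R : Rect m n) : R.spin * R.spin = 1 := by
  refine SpinElt.ext (Equiv.ext R.rotFun_involutive) (funext fun p => ?_)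
  show (if R.Mem p then (1 : ZMod 2) else 0) + (if R.Mem (R.rotFun p) then 1 else 0) = 0
  simp only [R.mem_rotFun_iff]
  exact CharTwo.add_self_eq_zero _

lemma spin_inv (R : Rect m n) : R.spin⁻¹ = R.spin :=
  inv_eq_of_mul_eq_one_right R.spin_mul_self

lemma conj_spin_eq_spin_iff {R₁ R₂ R₃ : Rect m n} :
    R₁.spin * R₂.spin * R₁.spin = R₃.spin ↔ ∀ p,
      R₁.rotFun (R₂.rotFun (R₁.rotFun p)) = R₃.rotFun p ∧
      (R₃.Mem p ↔ Xor (Xor (R₁.Mem p) (R₂.Mem (R₁.rotFun p)))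
        (R₁.Mem (R₂.rotFun (R₁.rotFun p)))) := by
  simp only [SpinElt.ext_iff, Equiv.ext_iff, funext_iff, ← forall_and]
  refine forall_congr' fun p => and_congr Iff.rfl ?_
  show (if R₁.Mem p then (1 : ZMod 2) else 0) + (if R₂.Mem (R₁.rotFun p) then 1 else 0)
      + (if R₁.Mem (R₂.rotFun (R₁.rotFun p)) then 1 else 0) = (if R₃.Mem p then 1 else 0) ↔ _
  rw [ZMod.two_ite_add_ite, ZMod.two_ite_add_ite, ZMod.two_ite_eq_ite_iff]
  exact iff_comm

def corner₁ (R : Rect m n) : Pos m n := (⟨R.r1, R.hr.trans_lt R.hm⟩, ⟨R.c1, R.hc.trans_lt R.hn⟩)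

def corner₂ (R : Rect m n) : Pos m n := (⟨R.r2, R.hm⟩, ⟨R.c2, R.hn⟩)

lemma mem_corner₁ (R : Rect m n) : R.Mem R.corner₁ := ⟨le_rfl, R.hr, le_rfl, R.hc⟩

lemma mem_corner₂ (R : Rect m n) : R.Mem R.corner₂ := ⟨R.hr, le_rfl, R.hc, le_rfl⟩

lemma Contains.mem {R₁ R₂ : Rect m n} (h : R₁.Contains R₂) {p : Pos m n} (hp : R₂.Mem p) :
    R₁.Mem p := by
  obtain ⟨h1, h2, h3, h4⟩ := h
  obtain ⟨k1, k2, k3, k4⟩ := hp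
  exact ⟨by omega, by omega, by omega, by omega⟩

lemma contains_of_mem_corners {R₁ R₂ : Rect m n} (h₁ : R₁.Mem R₂.corner₁)
    (h₂ : R₁.Mem R₂.corner₂) : R₁.Contains R₂ :=
  ⟨h₁.1, h₂.2.1, h₁.2.2.1, h₂.2.2.2⟩

lemma contains_of_forall_mem {R₁ R₂ : Rect m n} (h : ∀ p, R₂.Mem p → R₁.Mem p) :
    R₁.Contains R₂ :=
  contains_of_mem_corners (h _ R₂.mem_corner₁) (h _ R₂.mem_corner₂)

lemma Contains.antisymm {R₁ R₂ : Rect m n} (h₁₂ : R₁.Contains R₂) (h₂₁ : R₂.Contains R₁) :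
    R₁ = R₂ := by
  obtain ⟨h1, h2, h3, h4⟩ := h₁₂
  obtain ⟨k1, k2, k3, k4⟩ := h₂₁
  ext <;> omega

lemma mem_rotFun_iff_of_contains {R₁ R₂ : Rect m n} (h : R₁.Contains R₂) (p : Pos m n) :
    R₁.Mem (R₂.rotFun p) ↔ R₁.Mem p := by
  by_cases hp : R₂.Mem p
  · exact iff_of_true (h.mem (R₂.mem_rotFun p hp)) (h.mem hp)
  · rw [R₂.rotFun_of_not_mem p hp]

/-- The rectangle `R₂` rotated by 180° about the center of `R₁`. -/
def rotateIn (R₂ R₁ : Rect m n) (h : R₁.Contains R₂) : Rect m n where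
  r1 := R₁.r1 + R₁.r2 - R₂.r2
  c1 := R₁.c1 + R₁.c2 - R₂.c2
  r2 := R₁.r1 + R₁.r2 - R₂.r1
  c2 := R₁.c1 + R₁.c2 - R₂.c1
  hr := by have := R₂.hr; omega
  hc := by have := R₂.hc; omega
  hm := by have := h.1; have := R₁.hm; omega
  hn := by have := h.2.2.1; have := R₁.hn; omega

section rotateIn

variable {R₁ R₂ : Rect m n} (h : R₁.Contains R₂)

lemma dims_rotateIn : (R₂.rotateIn R₁ h).dims = R₂.dims := by
  obtain ⟨h1, h2, h3, h4⟩ := h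
  have := R₂.hr; have := R₂.hc
  simp only [dims, rotateIn, Prod.mk.injEq]
  omega

lemma contains_rotateIn : R₁.Contains (R₂.rotateIn R₁ h) := by
  obtain ⟨h1, h2, h3, h4⟩ := h
  have := R₂.hr; have := R₂.hc
  simp only [Contains, rotateIn]
  omega

lemma mem_rotateIn_iff (p : Pos m n) : (R₂.rotateIn R₁ h).Mem p ↔ R₂.Mem (R₁.rotFun p) := by
  by_cases hp : R₁.Mem p
  · have e₁ := R₁.rotFun_fst p hp
    have e₂ := R₁.rotFun_snd p hp
    obtain ⟨h1, h2, h3, h4⟩ := h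
    obtain ⟨k1, k2, k3, k4⟩ := hp
    have := R₂.hr; have := R₂.hc
    simp only [Mem, rotateIn, e₁, e₂]
    omega
  · rw [R₁.rotFun_of_not_mem p hp]
    exact iff_of_false (fun hp' => hp ((contains_rotateIn h).mem hp')) (fun hp' => hp (h.mem hp'))

lemma rotFun_rotateIn (p : Pos m n) :
    (R₂.rotateIn R₁ h).rotFun p = R₁.rotFun (R₂.rotFun (R₁.rotFun p)) := by
  by_cases hp₂ : R₂.Mem (R₁.rotFun p)
  · have hp₁ : R₁.Mem p := by
      by_contra hp₁
      exact hp₁ (h.mem (R₁.rotFun_of_not_mem p hp₁ ▸ hp₂))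
    have hp₃ := (mem_rotateIn_iff h p).2 hp₂
    have hq₁ := h.mem (R₂.mem_rotFun _ hp₂)
    have e₁ := R₁.rotFun_fst p hp₁
    have e₂ := R₁.rotFun_snd p hp₁
    have f₁ := R₂.rotFun_fst _ hp₂
    have f₂ := R₂.rotFun_snd _ hp₂
    have g₁ := R₁.rotFun_fst _ hq₁
    have g₂ := R₁.rotFun_snd _ hq₁
    have k₁ := (R₂.rotateIn R₁ h).rotFun_fst p hp₃
    have k₂ := (R₂.rotateIn R₁ h).rotFun_snd p hp₃
    obtain ⟨h1, h2, h3, h4⟩ := h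
    obtain ⟨l1, l2, l3, l4⟩ := hp₁
    obtain ⟨u1, u2, u3, u4⟩ := hp₂
    dsimp only [rotateIn] at k₁ k₂ ⊢
    ext <;> omega
  · rw [R₂.rotFun_of_not_mem _ hp₂, R₁.rotFun_involutive p,
      rotFun_of_not_mem _ p (mt (mem_rotateIn_iff h p).1 hp₂)]

lemma conj_spin_eq_spin_rotateIn : R₁.spin * R₂.spin * R₁.spin = (R₂.rotateIn R₁ h).spin := by
  refine conj_spin_eq_spin_iff.2 fun p => ⟨(rotFun_rotateIn h p).symm, ?_⟩
  rw [mem_rotFun_iff_of_contains h, R₁.mem_rotFun_iff, mem_rotateIn_iff h]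
  rw [xor_def, xor_def]
  tauto

end rotateIn

section conj

variable {R₁ R₂ R₃ : Rect m n} (h : R₁.spin * R₂.spin * R₁.spin = R₃.spin)
include h

lemma mem_rotFun_iff_of_conj_spin_eq_spin (q : Pos m n) : R₁.Mem (R₂.rotFun q) ↔ R₁.Mem q := by
  by_cases hfix : R₂.rotFun q = q
  · rw [hfix]
  have hq : R₂.Mem q := by
    by_contra hq
    exact hfix (R₂.rotFun_of_not_mem q hq)
  obtain ⟨hperm, hflip⟩ := conj_spin_eq_spin_iff.1 h (R₁.rotFun q)
  rw [R₁.rotFun_involutive q] at hperm hflip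
  rw [R₁.mem_rotFun_iff] at hflip
  have h₃ : R₃.Mem (R₁.rotFun q) := by
    by_contra h₃
    rw [R₃.rotFun_of_not_mem _ h₃] at hperm
    exact hfix (R₁.rotFun_involutive.injective hperm)
  simp only [h₃, hq, true_iff, xor_def] at hflip
  tauto

lemma mem_iff_of_conj_spin_eq_spin (p : Pos m n) : R₃.Mem p ↔ R₂.Mem (R₁.rotFun p) := by
  have hflip := (conj_spin_eq_spin_iff.1 h p).2
  rw [mem_rotFun_iff_of_conj_spin_eq_spin h, R₁.mem_rotFun_iff] at hflip
  rw [hflip, xor_def, xor_def]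
  tauto

end conj

lemma not_mem_corners_of_mem_rotFun_iff {R₁ R₂ : Rect m n}
    (hpres : ∀ q, R₁.Mem (R₂.rotFun q) ↔ R₁.Mem q) (hnc : ¬ R₁.Contains R₂) :
    ¬ R₁.Mem R₂.corner₁ ∧ ¬ R₁.Mem R₂.corner₂ := by
  rw [← not_or]
  intro hcorner
  simp only [Contains, Mem, corner₁, corner₂] at hnc hcorner
  have := R₁.hr; have := R₁.hc; have := R₂.hr; have := R₂.hc; have := R₂.hm; have := R₂.hn
  have hmeet : max R₁.r1 R₂.r1 ≤ min R₁.r2 R₂.r2 ∧ max R₁.c1 R₂.c1 ≤ min R₁.c2 R₂.c2 := by omega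
  let x : Pos m n := (⟨max R₁.r1 R₂.r1, by omega⟩, ⟨max R₁.c1 R₂.c1, by omega⟩)
  let y : Pos m n := (⟨min R₁.r2 R₂.r2, by omega⟩, ⟨min R₁.c2 R₂.c2, by omega⟩)
  have hx₂ : R₂.Mem x := ⟨le_max_right _ _, hmeet.1.trans (min_le_right _ _),
    le_max_right _ _, hmeet.2.trans (min_le_right _ _)⟩
  have hy₂ : R₂.Mem y := ⟨(le_max_right _ _).trans hmeet.1, min_le_right _ _,
    (le_max_right _ _).trans hmeet.2, min_le_right _ _⟩
  obtain ⟨a1, a2, a3, a4⟩ := (hpres x).2 ⟨le_max_left _ _, hmeet.1.trans (min_le_left _ _),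
    le_max_left _ _, hmeet.2.trans (min_le_left _ _)⟩
  obtain ⟨b1, b2, b3, b4⟩ := (hpres y).2 ⟨(le_max_left _ _).trans hmeet.1, min_le_left _ _,
    (le_max_left _ _).trans hmeet.2, min_le_left _ _⟩
  rw [R₂.rotFun_fst x hx₂] at a1 a2
  rw [R₂.rotFun_snd x hx₂] at a3 a4
  rw [R₂.rotFun_fst y hy₂] at b1 b2
  rw [R₂.rotFun_snd y hy₂] at b3 b4
  simp only [x, y] at a1 a2 a3 a4 b1 b2 b3 b4
  omega

lemma eq_of_conj_spin_eq_spin {R₁ R₂ R₃ : Rect m n} (h : R₁.spin * R₂.spin * R₁.spin = R₃.spin)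
    (hnc : ¬ R₁.Contains R₂) : R₃ = R₂ := by
  have hmem := mem_iff_of_conj_spin_eq_spin h
  obtain ⟨h₁, h₂⟩ := not_mem_corners_of_mem_rotFun_iff (mem_rotFun_iff_of_conj_spin_eq_spin h) hnc
  have h₃₂ : R₃.Contains R₂ := contains_of_mem_corners
    ((hmem _).2 (by rw [R₁.rotFun_of_not_mem _ h₁]; exact R₂.mem_corner₁))
    ((hmem _).2 (by rw [R₁.rotFun_of_not_mem _ h₂]; exact R₂.mem_corner₂))
  have h₂₃ : R₂.Contains R₃ := contains_of_forall_mem fun p hp => by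
    simpa only [R₁.rotFun_involutive p] using (hmem _).1 (h₃₂.mem ((hmem p).1 hp))
  exact h₃₂.antisymm h₂₃

end Rect

/-- `s₁s₂s₁` is a spin iff `s₁` and `s₂` commute or `R₁` contains `R₂`; in the latter
case the rectangle of `s₁s₂s₁` has the same dimensions (shape) as `R₂`. -/
theorem stmt5 (m n : ℕ) (R₁ R₂ : Rect m n) :
    (IsSpin (R₁.spin * R₂.spin * R₁.spin) ↔
      (R₁.spin * R₂.spin = R₂.spin * R₁.spin ∨ R₁.Contains R₂)) ∧
    (R₁.Contains R₂ →
      ∃ R₃ : Rect m n, R₁.spin * R₂.spin * R₁.spin = R₃.spin ∧ R₃.dims = R₂.dims) := by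
  have hconj_eq : R₁.spin * R₂.spin * R₁.spin = R₂.spin ↔ R₁.spin * R₂.spin = R₂.spin * R₁.spin := by
    simpa only [R₁.spin_inv] using mul_inv_eq_iff_eq_mul (a := R₁.spin * R₂.spin) (b := R₁.spin)
  refine ⟨⟨?_, ?_⟩, fun hc => ⟨_, Rect.conj_spin_eq_spin_rotateIn hc, Rect.dims_rotateIn hc⟩⟩
  · rintro ⟨R₃, h⟩
    refine or_iff_not_imp_right.2 fun hnc => hconj_eq.1 ?_
    rwa [Rect.eq_of_conj_spin_eq_spin h hnc] at h
  · rintro (hc | hc)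
    · exact ⟨R₂, hconj_eq.2 hc⟩
    · exact ⟨_, Rect.conj_spin_eq_spin_rotateIn hc⟩
end

section
/- For m, n ≥ 2 with mn > 4, the spins of types 1×2/2×1 and 2×2 generate the index-2 subgroup Spin^a_{m×n} = {(α, v) ∈ Spin_{m×n} : wt(v) ≡ 0 mod 2} of elements with even Hamming-weight orientation vector. -/
/-- The Hamming weight of the orientation vector of an element of `Spin_{m×n}`. -/
def wt {m n : ℕ} (x : SpinElt m n) : ℕ := (Finset.univ.filter (fun p => x.flip p = 1)).card

/-!
The parity of the number of flipped tiles is a homomorphism that kills every `1 × 2`, `2 × 1`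
and `2 × 2` spin, so these spins generate a subgroup `H` of the even part.

Conversely, a domino spin moves its two tiles by a transposition of adjacent cells, and these
transpositions generate the whole symmetric group of the board, so `H` maps onto it. It therefore
suffices to show that `H` contains every pure flip `(id, v)` with `v` of even weight. Because `H`
maps onto the symmetric group, the vectors `v` with `(id, v) ∈ H` form a permutation-invariant
subspace of `𝔽₂^{mn}`. It contains the indicator of a `2 × 2` square, which is non-constant because
`mn > 4`. Adding to such a vector its image under a transposition gives a vector `e_s + e_t`, and
these vectors span all even vectors.
-/

open Equiv Finset

theorem Equiv.Perm.eq_top_of_swap_mem_of_preconnected {α : Type*} [Finite α] [DecidableEq α]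
    {G : SimpleGraph α} (hG : G.Preconnected) {H : Subgroup (Perm α)}
    (hH : ∀ a b, G.Adj a b → swap a b ∈ H) : H = ⊤ := by
  have hswap (a b : α) : swap a b ∈ H := by
    induction (SimpleGraph.reachable_iff_reflTransGen a b).mp (hG a b) with
    | refl => rw [swap_self]; exact H.one_mem
    | tail _ hbc ih => exact SubmonoidClass.swap_mem_trans H ih (hH _ _ hbc)
  rw [eq_top_iff, ← Perm.closure_isSwap, Subgroup.closure_le]
  rintro _ ⟨a, b, -, rfl⟩
  exact hswap a b

section ZModTwoVectors

variable {ι : Type*} [DecidableEq ι]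

theorem add_comp_swap_eq_single_add_single (v : ι → ZMod 2) (s t : ι) :
    v + v ∘ swap s t = Pi.single s (v s + v t) + Pi.single t (v s + v t) := by
  ext q
  rcases eq_or_ne q s with rfl | hs
  · rcases eq_or_ne q t with rfl | ht
    · simp [CharTwo.add_self_eq_zero]
    · simp [ht, add_comm]
  · rcases eq_or_ne q t with rfl | ht
    · simp [hs, add_comm]
    · simp [hs, ht, swap_apply_of_ne_of_ne hs ht, CharTwo.add_self_eq_zero]

variable [Fintype ι]

theorem AddSubgroup.mem_of_sum_eq_zero_of_single_add_single_mem (K : AddSubgroup (ι → ZMod 2))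
    (s : ι) (hK : ∀ i, Pi.single i 1 + Pi.single s 1 ∈ K) {v : ι → ZMod 2}
    (hv : ∑ i, v i = 0) : v ∈ K := by
  have hdecomp : v = ∑ i, v i • (Pi.single i 1 + Pi.single s 1 : ι → ZMod 2) := by
    simp only [smul_add, sum_add_distrib, ← sum_smul, hv, zero_smul, add_zero]
    simp [← Pi.single_smul', univ_sum_single]
  rw [hdecomp, ← mem_toZModSubmodule 2]
  exact Submodule.sum_mem _ fun i _ => Submodule.smul_mem _ _ (hK i)

theorem AddSubgroup.mem_of_sum_eq_zero_of_comp_perm_mem (K : AddSubgroup (ι → ZMod 2))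
    (hK : ∀ v ∈ K, ∀ σ : Perm ι, v ∘ σ ∈ K) {w : ι → ZMod 2} (hw : w ∈ K) {s t : ι}
    (hst : w s ≠ w t) {v : ι → ZMod 2} (hv : ∑ i, v i = 0) : v ∈ K := by
  have hone : w s + w t = 1 := (by decide : ∀ a b : ZMod 2, a ≠ b → a + b = 1) _ _ hst
  have hpair : Pi.single s 1 + Pi.single t 1 ∈ K := by
    rw [← hone, ← add_comp_swap_eq_single_add_single]
    exact K.add_mem hw (hK w hw _)
  refine K.mem_of_sum_eq_zero_of_single_add_single_mem t (fun i => ?_) hv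
  rcases eq_or_ne i t with rfl | hit
  · rw [← Pi.single_add, CharTwo.add_self_eq_zero, Pi.single_zero]
    exact K.zero_mem
  rcases eq_or_ne i s with rfl | his
  · exact hpair
  have hts : t ≠ s := fun h => hst (h ▸ rfl)
  have := K.add_mem hpair (hK _ hpair (swap t i))
  rw [add_comp_swap_eq_single_add_single] at this
  simpa [Pi.single_apply, hit, his, hit.symm, hts, add_comm] using this

end ZModTwoVectors

namespace SpinElt

variable {m n : ℕ}

def permHom : SpinElt m n →* Perm (Pos m n) where
  toFun := perm
  map_one' := rfl
  map_mul' _ _ := rfl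

def flipSum : SpinElt m n →* Multiplicative (ZMod 2) where
  toFun x := .ofAdd (∑ p, x.flip p)
  map_one' := by simp
  map_mul' a b := by
    simp only [mul_def, sum_add_distrib, Equiv.sum_comp a.perm⁻¹ b.flip, ofAdd_add]

def evenSubgroup (m n : ℕ) : Subgroup (SpinElt m n) := flipSum.ker

theorem mem_evenSubgroup_iff_sum_eq_zero {x : SpinElt m n} :
    x ∈ evenSubgroup m n ↔ ∑ p, x.flip p = 0 := Iff.rfl

theorem mem_evenSubgroup {x : SpinElt m n} : x ∈ evenSubgroup m n ↔ Even (wt x) := by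
  have hbool (z : ZMod 2) : (if z = 1 then 1 else 0) = z := by revert z; decide
  rw [mem_evenSubgroup_iff_sum_eq_zero, wt, ← ZMod.natCast_eq_zero_iff_even, ← sum_boole]
  simp only [hbool]

def ofFlip (v : Pos m n → ZMod 2) : SpinElt m n := ⟨1, v⟩

theorem ofFlip_add (v w : Pos m n → ZMod 2) : ofFlip (v + w) = ofFlip v * ofFlip w := rfl

theorem ofFlip_neg (v : Pos m n → ZMod 2) : ofFlip (-v) = (ofFlip v)⁻¹ := by
  ext p <;> simp [ofFlip, ZMod.neg_eq_self_mod_two]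

theorem mul_ofFlip_mul_inv (x : SpinElt m n) (v : Pos m n → ZMod 2) :
    x * ofFlip v * x⁻¹ = ofFlip (v ∘ ⇑x.perm⁻¹) := by
  refine SpinElt.ext (by simp [ofFlip]) (funext fun p => ?_)
  simp [ofFlip, add_right_comm _ _ (x.flip p), CharTwo.add_self_eq_zero]

def pureFlips (H : Subgroup (SpinElt m n)) : AddSubgroup (Pos m n → ZMod 2) where
  carrier := {v | ofFlip v ∈ H}
  add_mem' {v w} hv hw := show ofFlip (v + w) ∈ H from ofFlip_add v w ▸ H.mul_mem hv hw
  zero_mem' := H.one_mem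
  neg_mem' {v} hv := show ofFlip (-v) ∈ H from ofFlip_neg v ▸ H.inv_mem hv

theorem comp_perm_mem_pureFlips {H : Subgroup (SpinElt m n)} (hH : H.map permHom = ⊤)
    {v : Pos m n → ZMod 2} (hv : v ∈ pureFlips H) (σ : Perm (Pos m n)) :
    v ∘ σ ∈ pureFlips H := by
  obtain ⟨x, hx, hxσ⟩ := Subgroup.mem_map.mp (hH ▸ Subgroup.mem_top σ⁻¹)
  have hconj := H.mul_mem (H.mul_mem hx hv) (H.inv_mem hx)
  rwa [mul_ofFlip_mul_inv, show x.perm = σ⁻¹ from hxσ, inv_inv] at hconj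

theorem mem_of_perm_eq {H : Subgroup (SpinElt m n)} {x h : SpinElt m n} (hh : h ∈ H)
    (hxh : x.perm = h.perm) (hflip : (x * h⁻¹).flip ∈ pureFlips H) : x ∈ H := by
  have := H.mul_mem hflip hh
  rwa [show ofFlip (x * h⁻¹).flip = x * h⁻¹ from SpinElt.ext (by simp [ofFlip, hxh]) rfl,
    inv_mul_cancel_right] at this

end SpinElt

namespace Rect

variable {m n : ℕ}

theorem rotFun_fst_val (R : Rect m n) (p : Pos m n) :
    ((R.rotFun p).1 : ℕ) = if R.Mem p then R.r1 + R.r2 - p.1 else p.1 := by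
  unfold rotFun; split_ifs <;> rfl

theorem rotFun_snd_val (R : Rect m n) (p : Pos m n) :
    ((R.rotFun p).2 : ℕ) = if R.Mem p then R.c1 + R.c2 - p.2 else p.2 := by
  unfold rotFun; split_ifs <;> rfl

theorem card_filter_mem (R : Rect m n) : #{p | R.Mem p} = R.dims.1 * R.dims.2 := by
  have hfin {k a b : ℕ} (hab : a ≤ b) (hb : b < k) :
      #{i : Fin k | a ≤ i ∧ (i : ℕ) ≤ b} = b + 1 - a := by
    have : ({i : Fin k | a ≤ i ∧ (i : ℕ) ≤ b} : Finset (Fin k)) = Icc ⟨a, by omega⟩ ⟨b, hb⟩ := by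
      ext i; simp [Fin.le_def]
    rw [this, Fin.card_Icc]
  rw [dims, ← hfin R.hr R.hm, ← hfin R.hc R.hn, ← card_product, ← filter_product,
    univ_product_univ]
  simp only [Mem, and_assoc]

theorem wt_spin (R : Rect m n) : wt R.spin = R.dims.1 * R.dims.2 := by
  rw [← card_filter_mem, wt]
  congr 1
  exact filter_congr fun p _ => by by_cases h : R.Mem p <;> simp [spin, h]

def ofCorners (a b : Pos m n) (h1 : a.1 ≤ b.1) (h2 : a.2 ≤ b.2) : Rect m n :=
  ⟨a.1, a.2, b.1, b.2, h1, h2, b.1.isLt, b.2.isLt⟩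

theorem spinPerm_ofCorners_eq_swap (a b : Pos m n) (h1 : a.1 ≤ b.1) (h2 : a.2 ≤ b.2)
    (hab : (b.1 : ℕ) - a.1 + (b.2 - a.2) = 1) :
    (ofCorners a b h1 h2).spinPerm = swap a b := by
  ext1 p
  show rotFun _ p = _
  rw [Fin.le_def] at h1 h2
  rw [swap_apply_def]
  split_ifs <;>
  · simp only [Prod.ext_iff, Fin.ext_iff, rotFun_fst_val, rotFun_snd_val, Mem, ofCorners] at *
    split_ifs with hm <;> simp only [hm, if_true, if_false, and_self] <;> omega

def topLeftSquare (hm : 2 ≤ m) (hn : 2 ≤ n) : Rect m n :=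
  ⟨0, 0, 1, 1, zero_le_one, zero_le_one, hm, hn⟩

end Rect

section SmallSpins

variable {m n : ℕ}

def smallSpins (m n : ℕ) : Set (SpinElt m n) :=
  {s | ∃ R : Rect m n, s = R.spin ∧ (R.dims = (1, 2) ∨ R.dims = (2, 1) ∨ R.dims = (2, 2))}

theorem closure_smallSpins_le_evenSubgroup :
    Subgroup.closure (smallSpins m n) ≤ SpinElt.evenSubgroup m n := by
  rw [Subgroup.closure_le]
  rintro _ ⟨R, rfl, hR⟩
  rw [SetLike.mem_coe, SpinElt.mem_evenSubgroup, R.wt_spin]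
  rcases hR with h | h | h <;> rw [h] <;> decide

theorem swap_mem_map_closure_smallSpins (a b : Pos m n) (h1 : a.1 ≤ b.1) (h2 : a.2 ≤ b.2)
    (hab : (b.1 : ℕ) - a.1 + (b.2 - a.2) = 1) :
    swap a b ∈ (Subgroup.closure (smallSpins m n)).map SpinElt.permHom := by
  refine ⟨(Rect.ofCorners a b h1 h2).spin, Subgroup.subset_closure ⟨_, rfl, ?_⟩,
    Rect.spinPerm_ofCorners_eq_swap a b h1 h2 hab⟩
  rw [Fin.le_def] at h1 h2
  simp only [Rect.dims, Rect.ofCorners, Prod.mk.injEq]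
  omega

theorem map_closure_smallSpins_eq_top :
    (Subgroup.closure (smallSpins m n)).map SpinElt.permHom = ⊤ := by
  refine Perm.eq_top_of_swap_mem_of_preconnected
    ((SimpleGraph.pathGraph_preconnected m).boxProd (SimpleGraph.pathGraph_preconnected n))
    fun a b hab => ?_
  simp only [SimpleGraph.boxProd_adj, SimpleGraph.pathGraph_adj, Fin.ext_iff] at hab
  rcases hab with ⟨h | h, h'⟩ | ⟨h | h, h'⟩
  all_goals first
    | exact swap_mem_map_closure_smallSpins a b (Fin.le_def.mpr (by omega))
        (Fin.le_def.mpr (by omega)) (by omega)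
    | exact swap_comm a b ▸ swap_mem_map_closure_smallSpins b a (Fin.le_def.mpr (by omega))
        (Fin.le_def.mpr (by omega)) (by omega)

/-- The spin of the square followed by those of its two rows and its two columns moves no tile
and flips each tile of the square three times. -/
theorem flip_topLeftSquare_mem (hm : 2 ≤ m) (hn : 2 ≤ n) :
    (Rect.topLeftSquare hm hn).spin.flip ∈
      SpinElt.pureFlips (Subgroup.closure (smallSpins m n)) := by
  let R : Rect m n := Rect.topLeftSquare hm hn
  let row₀ : Rect m n := ⟨0, 0, 0, 1, le_rfl, zero_le_one, by omega, hn⟩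
  let row₁ : Rect m n := ⟨1, 0, 1, 1, le_rfl, zero_le_one, hm, hn⟩
  let col₀ : Rect m n := ⟨0, 0, 1, 0, zero_le_one, le_rfl, hm, by omega⟩
  let col₁ : Rect m n := ⟨0, 1, 1, 1, zero_le_one, le_rfl, hm, hn⟩
  have hprod : R.spin * row₀.spin * row₁.spin * col₀.spin * col₁.spin =
      SpinElt.ofFlip R.spin.flip := by
    ext ⟨⟨i, hi⟩, ⟨j, hj⟩⟩ <;>
    · simp only [SpinElt.mul_def, SpinElt.ofFlip, Rect.spin, Rect.spinPerm, mul_inv_rev,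
        Perm.inv_def, Function.Involutive.toPerm_symm, Function.Involutive.coe_toPerm,
        Perm.mul_apply, Perm.one_apply]
      by_cases hij : i ≤ 1 ∧ j ≤ 1
      · obtain ⟨hi1, hj1⟩ := hij
        interval_cases i <;> interval_cases j <;>
          simp only [Rect.rotFun_fst_val, Rect.rotFun_snd_val, Rect.Mem, R, row₀, row₁, col₀,
            col₁, Rect.topLeftSquare, ite_true, and_true, true_and, zero_le, le_refl] <;> decide
      · have hout : (¬ i ≤ 0 ∧ ¬ i ≤ 1) ∨ (¬ j ≤ 0 ∧ ¬ j ≤ 1) := by omega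
        rcases hout with ⟨h0, h1⟩ | ⟨h0, h1⟩ <;>
          simp only [Rect.rotFun_fst_val, Rect.rotFun_snd_val, Rect.Mem, R, row₀, row₁, col₀,
            col₁, Rect.topLeftSquare, ite_false, true_and, zero_le, h0, h1, and_false,
            false_and] <;> decide
  have hmem (S : Rect m n) (hS : S.dims = (1, 2) ∨ S.dims = (2, 1) ∨ S.dims = (2, 2)) :
      S.spin ∈ Subgroup.closure (smallSpins m n) := Subgroup.subset_closure ⟨S, rfl, hS⟩
  show SpinElt.ofFlip R.spin.flip ∈ Subgroup.closure (smallSpins m n)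
  rw [← hprod]
  exact mul_mem (mul_mem (mul_mem (mul_mem (hmem R (.inr (.inr rfl))) (hmem row₀ (.inl rfl)))
    (hmem row₁ (.inl rfl))) (hmem col₀ (.inr (.inl rfl)))) (hmem col₁ (.inr (.inl rfl)))

theorem evenSubgroup_le_closure_smallSpins (hm : 2 ≤ m) (hn : 2 ≤ n) (hmn : 4 < m * n) :
    SpinElt.evenSubgroup m n ≤ Subgroup.closure (smallSpins m n) := by
  intro x hx
  have hH := map_closure_smallSpins_eq_top (m := m) (n := n)
  obtain ⟨h, hh, hhx⟩ := Subgroup.mem_map.mp (hH ▸ Subgroup.mem_top x.perm)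
  let S := Rect.topLeftSquare hm hn
  obtain ⟨t, -, ht⟩ := exists_mem_notMem_of_card_lt_card (s := {p | S.Mem p}) (t := univ)
    (by rwa [S.card_filter_mem, card_univ, Fintype.card_prod, Fintype.card_fin, Fintype.card_fin])
  replace ht : ¬ S.Mem t := by simpa using ht
  have hcorner : S.Mem (⟨0, by omega⟩, ⟨0, by omega⟩) := by simp [Rect.Mem, S, Rect.topLeftSquare]
  refine SpinElt.mem_of_perm_eq hh hhx.symm ?_
  refine AddSubgroup.mem_of_sum_eq_zero_of_comp_perm_mem _
    (fun w hw σ => SpinElt.comp_perm_mem_pureFlips hH hw σ) (flip_topLeftSquare_mem hm hn)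
    (s := (⟨0, by omega⟩, ⟨0, by omega⟩)) (t := t) ?_ ?_
  · simp [Rect.spin, S, hcorner, ht]
  · exact SpinElt.mem_evenSubgroup_iff_sum_eq_zero.mp <| (SpinElt.evenSubgroup m n).mul_mem hx
      ((SpinElt.evenSubgroup m n).inv_mem (closure_smallSpins_le_evenSubgroup hh))

end SmallSpins

/-- For `m, n ≥ 2` with `mn > 4`, the spins of types `1×2`, `2×1` and `2×2` generate
exactly the index-2 subgroup `Spin^a_{m×n}` of elements whose orientation vector has
even Hamming weight. -/
theorem stmt16 (m n : ℕ) (hm : 2 ≤ m) (hn : 2 ≤ n) (hmn : 4 < m * n) :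
    (Subgroup.closure {s : SpinElt m n | ∃ R : Rect m n, s = R.spin ∧
        (R.dims = (1, 2) ∨ R.dims = (2, 1) ∨ R.dims = (2, 2))} : Set (SpinElt m n))
      = {x : SpinElt m n | Even (wt x)} := by
  have h : Subgroup.closure (smallSpins m n) = SpinElt.evenSubgroup m n :=
    le_antisymm closure_smallSpins_le_evenSubgroup (evenSubgroup_le_closure_smallSpins hm hn hmn)
  change (Subgroup.closure (smallSpins m n) : Set (SpinElt m n)) = _
  rw [h]
  ext x
  exact SpinElt.mem_evenSubgroup
end
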